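/- arXiv:1012.0416 — 4 statements merged into one kernel-verified Lean document; each statement's English description precedes it below -/
import Mathlib

section
/- For jointly distributed discrete random variables where (X_v)_{v∈O_l} are mutually independent, the function (U, W) ↦ I(X_U ; Ŷ_W | X_{O_l \ U}), defined for U ⊆ O_l and W ⊆ O_{l+1}, is bisubmodular: I(X_{U₁∪U₂}; Ŷ_{W₁∩W₂} | X_{O_l \ (U₁∪U₂)}) + I(X_{U₁∩U₂}; Ŷ_{W₁∪W₂} | X_{O_l \ (U₁∩U₂)}) ≤ I(X_{U₁}; Ŷ_{W₁} | X_{O_l \ U₁}) + I(X_{U₂}; Ŷ_{W₂} | X_{O_l \ U₂}). -/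
open Finset

noncomputable section

/-- Probability that the discrete random variable `Z` takes the value `b`,
under the weight function `p` on the finite sample space `Ω`. -/
def prOf {Ω : Type} [Fintype Ω] (p : Ω → ℝ) {β : Type} [DecidableEq β]
    (Z : Ω → β) (b : β) : ℝ :=
  ∑ ω, if Z ω = b then p ω else 0

/-- Shannon entropy (base 2) of a discrete random variable. -/
def ent {Ω : Type} [Fintype Ω] (p : Ω → ℝ) {β : Type} [Fintype β] [DecidableEq β]
    (Z : Ω → β) : ℝ :=
  -∑ b, prOf p Z b * Real.logb 2 (prOf p Z b)

/-- Conditional entropy `H(Z | W)`. -/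
def condEnt {Ω : Type} [Fintype Ω] (p : Ω → ℝ) {β γ : Type} [Fintype β] [DecidableEq β]
    [Fintype γ] [DecidableEq γ] (Z : Ω → β) (W : Ω → γ) : ℝ :=
  ent p (fun ω => (Z ω, W ω)) - ent p W

/-- Mutual information `I(Z₁; Z₂)`. -/
def mi {Ω : Type} [Fintype Ω] (p : Ω → ℝ) {β₁ β₂ : Type} [Fintype β₁] [DecidableEq β₁]
    [Fintype β₂] [DecidableEq β₂] (Z₁ : Ω → β₁) (Z₂ : Ω → β₂) : ℝ :=
  ent p Z₁ + ent p Z₂ - ent p (fun ω => (Z₁ ω, Z₂ ω))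

/-- Conditional mutual information `I(Z₁; Z₂ | W)`. -/
def condMI {Ω : Type} [Fintype Ω] (p : Ω → ℝ) {β₁ β₂ γ : Type} [Fintype β₁] [DecidableEq β₁]
    [Fintype β₂] [DecidableEq β₂] [Fintype γ] [DecidableEq γ]
    (Z₁ : Ω → β₁) (Z₂ : Ω → β₂) (W : Ω → γ) : ℝ :=
  condEnt p Z₁ W + condEnt p Z₂ W - condEnt p (fun ω => (Z₁ ω, Z₂ ω)) W

/-- The joint random variable `(X_a)_{a ∈ A}` over a finite index set `A`. -/
def joint {Ω ι β : Type} (X : ι → Ω → β) (A : Finset ι) : Ω → (A → β) :=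
  fun ω a => X a.1 ω

/-! Write `A = O_l \ U`. Since `X_{O_l}` is a function of `(X_U, X_A)`,
`I(X_U ; Ŷ_W | X_A) = H(Ŷ_W | X_A) - H(Ŷ_W | X_{O_l})`, and by the two independence assumptions this
is `H(Ŷ_W, X_A) - ∑_{v ∈ A} H(X_v) - ∑_{w ∈ W} H(Ŷ_w | X_{O_l})`. The last two terms are modular,
and `U ↦ O_l \ U` exchanges unions and intersections, so bisubmodularity reduces to the
submodularity of the joint entropy `(W, A) ↦ H(Ŷ_W, X_A)`. That is the nonnegativity of a
conditional mutual information, which in turn is Gibbs' inequality. -/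

theorem gibbs_inequality {α : Type*} [Fintype α] {b : ℝ} (hb : 1 < b) {P Q : α → ℝ}
    (hP : ∀ x, 0 ≤ P x) (hP1 : ∑ x, P x = 1) (hQ : ∀ x, 0 ≤ Q x) (hQ1 : ∑ x, Q x ≤ 1)
    (hPQ : ∀ x, 0 < P x → 0 < Q x) : 0 ≤ ∑ x, P x * Real.logb b (P x / Q x) := by
  have hlogb : 0 < Real.log b := Real.log_pos hb
  have hterm : ∀ x, (P x - Q x) / Real.log b ≤ P x * Real.logb b (P x / Q x) := by
    intro x
    rcases (hP x).eq_or_lt with h0 | hpos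
    · simpa [← h0, neg_div] using div_nonneg (hQ x) hlogb.le
    have hQx := hPQ x hpos
    rw [Real.logb, ← mul_div_assoc, div_le_div_iff_of_pos_right hlogb,
      ← neg_neg (Real.log _), ← Real.log_inv, inv_div]
    have := mul_le_mul_of_nonneg_left (Real.log_le_sub_one_of_pos (div_pos hQx hpos)) hpos.le
    rw [mul_sub, mul_div_cancel₀ _ hpos.ne', mul_one] at this
    linarith
  calc (0 : ℝ) ≤ (∑ x, P x - ∑ x, Q x) / Real.log b := div_nonneg (by linarith) hlogb.le
    _ = ∑ x, (P x - Q x) / Real.log b := by rw [← Finset.sum_sub_distrib, Finset.sum_div]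
    _ ≤ _ := Finset.sum_le_sum fun x _ => hterm x

theorem mul_logb_sub_eq_mul_logb_div {b x x₁ x₂ x₃ : ℝ} (hx : 0 ≤ x) (h₁ : x ≤ x₁) (h₂ : x ≤ x₂)
    (h₃ : x ≤ x₃) : x * (Real.logb b x + Real.logb b x₃ - Real.logb b x₁ - Real.logb b x₂) =
      x * Real.logb b (x / (x₁ * x₂ / x₃)) := by
  rcases hx.eq_or_lt with rfl | hpos
  · simp
  have := hpos.trans_le h₁
  have := hpos.trans_le h₂
  have := hpos.trans_le h₃
  rw [div_div_eq_mul_div, Real.logb_div (by positivity) (by positivity),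
    Real.logb_mul (by positivity) (by positivity), Real.logb_mul (by positivity) (by positivity)]
  ring

theorem Finset.restrict_compl_injective {ι : Type*} [DecidableEq ι] [Fintype ι] {π : ι → Type*}
    (s : Finset ι) : Function.Injective fun f : (∀ i, π i) => (s.restrict f, sᶜ.restrict f) := by
  intro f g h
  simp only [Prod.ext_iff, funext_iff, Subtype.forall, Finset.restrict, Finset.mem_compl] at h
  exact funext fun i => if hi : i ∈ s then h.1 i hi else h.2 i hi

theorem Finset.restrict₂_union_injective {ι : Type*} [DecidableEq ι] {π : ι → Type*}
    {s t : Finset ι} : Function.Injective fun f : (∀ i : ↥(s ∪ t), π i) =>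
      (restrict₂ subset_union_left f, restrict₂ subset_union_right f) := by
  intro f g h
  simp only [Prod.ext_iff, funext_iff, Subtype.forall, restrict₂] at h
  exact funext fun ⟨i, hi⟩ => (mem_union.1 hi).elim (h.1 i) (h.2 i)

section Distribution

variable {Ω β δ : Type} [Fintype Ω] (p : Ω → ℝ)

theorem prOf_nonneg (hp : ∀ ω, 0 ≤ p ω) [DecidableEq β] (Z : Ω → β) (b : β) :
    0 ≤ prOf p Z b :=
  Finset.sum_nonneg fun ω _ => by split_ifs <;> simp [hp ω]

theorem sum_prOf_mul [Fintype β] [DecidableEq β] (Z : Ω → β) (h : β → ℝ) :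
    ∑ b, prOf p Z b * h b = ∑ ω, p ω * h (Z ω) := by
  simp only [prOf, Finset.sum_mul, ite_mul, zero_mul]
  rw [Finset.sum_comm]
  exact Finset.sum_congr rfl fun ω _ => by simp

theorem sum_prOf (hp1 : ∑ ω, p ω = 1) [Fintype β] [DecidableEq β] (Z : Ω → β) :
    ∑ b, prOf p Z b = 1 := by
  simpa [hp1] using sum_prOf_mul p Z fun _ => 1

theorem prOf_comp [Fintype β] [DecidableEq β] [DecidableEq δ] (g : β → δ) (Z : Ω → β) (c : δ) :
    prOf p (fun ω => g (Z ω)) c = ∑ b, if g b = c then prOf p Z b else 0 := by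
  simpa [mul_ite, prOf] using (sum_prOf_mul p Z fun b => if g b = c then 1 else 0).symm

theorem prOf_le_prOf_comp (hp : ∀ ω, 0 ≤ p ω) [DecidableEq β] [DecidableEq δ]
    (g : β → δ) (Z : Ω → β) (b : β) : prOf p Z b ≤ prOf p (fun ω => g (Z ω)) (g b) :=
  Finset.sum_le_sum fun ω _ => by
    by_cases h : Z ω = b
    · simp [h]
    · split_ifs <;> simp [hp ω]

theorem prOf_comp_of_injective [DecidableEq β] [DecidableEq δ] {g : β → δ}
    (hg : Function.Injective g) (Z : Ω → β) (b : β) :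
    prOf p (fun ω => g (Z ω)) (g b) = prOf p Z b := by
  simp only [prOf, hg.eq_iff]

theorem sum_prOf_prodMk_left [Fintype β] [DecidableEq β] [DecidableEq δ] (Z : Ω → β)
    (W : Ω → δ) (c : δ) : ∑ a, prOf p (fun ω => (Z ω, W ω)) (a, c) = prOf p W c := by
  simp only [prOf, Prod.ext_iff]
  rw [Finset.sum_comm]
  exact Finset.sum_congr rfl fun ω _ => by simp [ite_and]

end Distribution

section Entropy

variable {Ω : Type} [Fintype Ω] (p : Ω → ℝ)

theorem ent_eq_neg_sum {β : Type} [Fintype β] [DecidableEq β] (Z : Ω → β) :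
    ent p Z = -∑ ω, p ω * Real.logb 2 (prOf p Z (Z ω)) := by
  rw [ent, sum_prOf_mul p Z fun b => Real.logb 2 (prOf p Z b)]

theorem ent_comp_of_injective {β δ : Type} [Fintype β] [DecidableEq β] [Fintype δ]
    [DecidableEq δ] {g : β → δ} (hg : Function.Injective g) (Z : Ω → β) :
    ent p (fun ω => g (Z ω)) = ent p Z := by
  simp only [ent_eq_neg_sum, prOf_comp_of_injective p hg]

theorem ent_prodMk_comp {β δ : Type} [Fintype β] [DecidableEq β] [Fintype δ] [DecidableEq δ]
    (Z : Ω → β) (f : β → δ) : ent p (fun ω => (Z ω, f (Z ω))) = ent p Z :=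
  ent_comp_of_injective p (g := fun b => (b, f b)) (fun _ _ h => (Prod.ext_iff.1 h).1) Z

section MutualInformation

variable {β₁ β₂ γ : Type} [Fintype β₁] [DecidableEq β₁] [Fintype β₂] [DecidableEq β₂]
  [Fintype γ] [DecidableEq γ]

theorem condMI_eq_sum (Z₁ : Ω → β₁) (Z₂ : Ω → β₂) (W : Ω → γ) :
    condMI p Z₁ Z₂ W = ∑ t : (β₁ × β₂) × γ, prOf p (fun ω => ((Z₁ ω, Z₂ ω), W ω)) t *
      (Real.logb 2 (prOf p (fun ω => ((Z₁ ω, Z₂ ω), W ω)) t) + Real.logb 2 (prOf p W t.2)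
        - Real.logb 2 (prOf p (fun ω => (Z₁ ω, W ω)) (t.1.1, t.2))
        - Real.logb 2 (prOf p (fun ω => (Z₂ ω, W ω)) (t.1.2, t.2))) := by
  rw [sum_prOf_mul]
  simp only [condMI, condEnt, ent_eq_neg_sum, mul_add, mul_sub, Finset.sum_add_distrib,
    Finset.sum_sub_distrib]
  ring

theorem condMI_nonneg (hp : ∀ ω, 0 ≤ p ω) (hp1 : ∑ ω, p ω = 1)
    (Z₁ : Ω → β₁) (Z₂ : Ω → β₂) (W : Ω → γ) : 0 ≤ condMI p Z₁ Z₂ W := by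
  set P := prOf p (fun ω => ((Z₁ ω, Z₂ ω), W ω))
  set P₁ := prOf p (fun ω => (Z₁ ω, W ω))
  set P₂ := prOf p (fun ω => (Z₂ ω, W ω))
  set P₃ := prOf p W
  -- the law of `((Z₁, Z₂), W)` when `Z₁` and `Z₂` are made conditionally independent given `W`
  set Q : (β₁ × β₂) × γ → ℝ := fun t => P₁ (t.1.1, t.2) * P₂ (t.1.2, t.2) / P₃ t.2
  have hP₁ : ∀ t, P t ≤ P₁ (t.1.1, t.2) :=
    prOf_le_prOf_comp p hp (fun t : (β₁ × β₂) × γ => (t.1.1, t.2)) _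
  have hP₂ : ∀ t, P t ≤ P₂ (t.1.2, t.2) :=
    prOf_le_prOf_comp p hp (fun t : (β₁ × β₂) × γ => (t.1.2, t.2)) _
  have hP₃ : ∀ t, P t ≤ P₃ t.2 := prOf_le_prOf_comp p hp Prod.snd _
  have hQ1 : ∑ t, Q t = 1 := by
    calc ∑ t, Q t = ∑ c, (∑ a, P₁ (a, c)) * (∑ b, P₂ (b, c)) / P₃ c := by
          simp only [Q, Fintype.sum_prod_type, Finset.sum_mul_sum, Finset.sum_div]
          rw [Finset.sum_congr rfl fun _ _ => Finset.sum_comm]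
          exact Finset.sum_comm
      _ = ∑ c, P₃ c := by simp only [P₁, P₂, P₃, sum_prOf_prodMk_left, mul_self_div_self]
      _ = 1 := sum_prOf p hp1 W
  rw [condMI_eq_sum]
  refine le_of_le_of_eq ?_ (Finset.sum_congr rfl fun t _ =>
    mul_logb_sub_eq_mul_logb_div (prOf_nonneg p hp _ t) (hP₁ t) (hP₂ t) (hP₃ t)).symm
  refine gibbs_inequality one_lt_two (prOf_nonneg p hp _) (sum_prOf p hp1 _)
    (fun t => div_nonneg (mul_nonneg (prOf_nonneg p hp _ _) (prOf_nonneg p hp _ _))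
      (prOf_nonneg p hp _ _)) hQ1.le fun t hpos => ?_
  exact div_pos (mul_pos (hpos.trans_le (hP₁ t)) (hpos.trans_le (hP₂ t))) (hpos.trans_le (hP₃ t))

end MutualInformation

theorem ent_add_ent_prodMk_le (hp : ∀ ω, 0 ≤ p ω) (hp1 : ∑ ω, p ω = 1)
    {α₁ α₂ δ : Type} [Fintype α₁] [DecidableEq α₁] [Fintype α₂] [DecidableEq α₂] [Fintype δ]
    [DecidableEq δ] (A : Ω → α₁) (B : Ω → α₂) {C : Ω → δ} (f : α₁ → δ) (g : α₂ → δ)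
    (hf : ∀ ω, C ω = f (A ω)) (hg : ∀ ω, C ω = g (B ω)) :
    ent p C + ent p (fun ω => (A ω, B ω)) ≤ ent p A + ent p B := by
  have h := condMI_nonneg p hp hp1 A B C
  have hAC : ent p (fun ω => (A ω, C ω)) = ent p A := by
    simpa only [hf] using ent_prodMk_comp p A f
  have hBC : ent p (fun ω => (B ω, C ω)) = ent p B := by
    simpa only [hg] using ent_prodMk_comp p B g
  have hABC : ent p (fun ω => ((A ω, B ω), C ω)) = ent p (fun ω => (A ω, B ω)) := by
    simpa only [hf] using ent_prodMk_comp p (fun ω => (A ω, B ω)) fun ab => f ab.1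
  simp only [condMI, condEnt, hAC, hBC, hABC] at h
  linarith

theorem ent_joint_prodMk_submodular (hp : ∀ ω, 0 ≤ p ω) (hp1 : ∑ ω, p ω = 1)
    {κ₁ κ₂ α₁ α₂ : Type} [DecidableEq κ₁] [DecidableEq κ₂] [Fintype α₁] [DecidableEq α₁]
    [Fintype α₂] [DecidableEq α₂] (Y : κ₁ → Ω → α₁) (X : κ₂ → Ω → α₂) (S₁ S₂ : Finset κ₁)
    (A B : Finset κ₂) :
    ent p (fun ω => (joint Y (S₁ ∩ S₂) ω, joint X (A ∩ B) ω)) +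
        ent p (fun ω => (joint Y (S₁ ∪ S₂) ω, joint X (A ∪ B) ω)) ≤
      ent p (fun ω => (joint Y S₁ ω, joint X A ω)) +
        ent p (fun ω => (joint Y S₂ ω, joint X B ω)) := by
  let g : (↥(S₁ ∪ S₂) → α₁) × (↥(A ∪ B) → α₂) → ((S₁ → α₁) × (A → α₂)) × ((S₂ → α₁) × (B → α₂)) :=
    fun yx => ((restrict₂ (π := fun _ => α₁) subset_union_left yx.1,
        restrict₂ (π := fun _ => α₂) subset_union_left yx.2),
      (restrict₂ (π := fun _ => α₁) subset_union_right yx.1,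
        restrict₂ (π := fun _ => α₂) subset_union_right yx.2))
  have hg : Function.Injective g := by
    rintro ⟨y, x⟩ ⟨y', x'⟩ h
    simp only [g, Prod.mk.injEq] at h
    obtain ⟨⟨hy₁, hx₁⟩, hy₂, hx₂⟩ := h
    exact Prod.ext (restrict₂_union_injective (π := fun _ => α₁) (Prod.ext hy₁ hy₂))
      (restrict₂_union_injective (π := fun _ => α₂) (Prod.ext hx₁ hx₂))
  rw [← ent_comp_of_injective p hg]
  exact ent_add_ent_prodMk_le p hp hp1 _ _
    (fun yx => (restrict₂ (π := fun _ => α₁) inter_subset_left yx.1,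
      restrict₂ (π := fun _ => α₂) inter_subset_left yx.2))
    (fun yx => (restrict₂ (π := fun _ => α₁) inter_subset_right yx.1,
      restrict₂ (π := fun _ => α₂) inter_subset_right yx.2))
    (fun _ => rfl) (fun _ => rfl)

variable {ι β : Type} [Fintype ι] [DecidableEq ι] [Fintype β] [DecidableEq β]

theorem ent_eq_sum_of_prOf_eq_prod (Z : Ω → ι → β)
    (hZ : ∀ f, prOf p Z f = ∏ i, prOf p (fun ω => Z ω i) (f i)) :
    ent p Z = ∑ i, ent p (fun ω => Z ω i) := by
  have hsplit : ∀ f, prOf p Z f * Real.logb 2 (prOf p Z f) =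
      ∑ i, prOf p Z f * Real.logb 2 (prOf p (fun ω => Z ω i) (f i)) := by
    intro f
    by_cases h0 : prOf p Z f = 0
    · simp [h0]
    rw [← Finset.mul_sum, ← Real.logb_prod _ _ fun i _ => ?_, ← hZ]
    exact Finset.prod_ne_zero_iff.1 (hZ f ▸ h0) i (Finset.mem_univ i)
  rw [ent]
  simp only [hsplit]
  rw [Finset.sum_comm, ← Finset.sum_neg_distrib]
  refine Finset.sum_congr rfl fun i _ => ?_
  rw [sum_prOf_mul p Z fun f => Real.logb 2 (prOf p (fun ω => Z ω i) (f i)), ent_eq_neg_sum]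

theorem prOf_joint_eq_prod (hp1 : ∑ ω, p ω = 1) (X : ι → Ω → β)
    (hindep : ∀ x : ι → β, prOf p (fun ω i => X i ω) x = ∏ i, prOf p (X i) (x i))
    (A : Finset ι) (f : A → β) : prOf p (joint X A) f = ∏ a : A, prOf p (X a) (f a) := by
  let t : ∀ i, Finset β := fun i => if h : i ∈ A then {f ⟨i, h⟩} else univ
  have hfilter : univ.filter (fun x : ι → β => A.restrict x = f) = Fintype.piFinset t := by
    ext x
    simp only [mem_filter, mem_univ, true_and, Fintype.mem_piFinset, funext_iff,
      Subtype.forall, restrict, t]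
    refine forall_congr' fun i => ?_
    split_ifs with hi <;> simp [hi]
  have hfactor : ∀ i, ∑ b ∈ t i, prOf p (X i) b =
      if h : i ∈ A then prOf p (X i) (f ⟨i, h⟩) else 1 := by
    intro i
    split_ifs with hi <;> simp [t, hi, sum_prOf p hp1]
  calc prOf p (joint X A) f
      = ∑ x, if A.restrict x = f then prOf p (fun ω i => X i ω) x else 0 :=
        prOf_comp p A.restrict (fun ω i => X i ω) f
    _ = ∑ x ∈ Fintype.piFinset t, ∏ i, prOf p (X i) (x i) := by
        rw [← hfilter, sum_filter]
        simp only [hindep]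
    _ = ∏ a : A, prOf p (X a) (f a) := by
        rw [← prod_univ_sum, prod_congr rfl fun i _ => hfactor i, univ_eq_attach]
        exact (prod_attach_eq_prod_dite A fun a => prOf p (X a) (f a)).symm

theorem ent_joint_eq_sum (hp1 : ∑ ω, p ω = 1) (X : ι → Ω → β)
    (hindep : ∀ x : ι → β, prOf p (fun ω i => X i ω) x = ∏ i, prOf p (X i) (x i))
    (A : Finset ι) : ent p (joint X A) = ∑ i ∈ A, ent p (X i) :=
  (ent_eq_sum_of_prOf_eq_prod p _ (prOf_joint_eq_prod p hp1 X hindep A)).trans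
    (sum_coe_sort A fun i => ent p (X i))

theorem condMI_joint_compl {δ : Type} [Fintype δ] [DecidableEq δ] (X : ι → Ω → β) (Y : Ω → δ)
    (U : Finset ι) :
    condMI p (joint X U) Y (joint X Uᶜ) =
      condEnt p Y (joint X Uᶜ) - condEnt p Y (fun ω i => X i ω) := by
  have hX : ent p (fun ω => (joint X U ω, joint X Uᶜ ω)) = ent p (fun ω i => X i ω) :=
    (ent_comp_of_injective p (U.restrict_compl_injective (π := fun _ => β)) fun ω i => X i ω :)
  let g : δ × (ι → β) → ((U → β) × δ) × (↥Uᶜ → β) :=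
    fun yx => ((U.restrict yx.2, yx.1), Uᶜ.restrict yx.2)
  have hg : Function.Injective g := by
    rintro ⟨y, x⟩ ⟨y', x'⟩ h
    simp only [g, Prod.mk.injEq] at h
    obtain ⟨⟨hx₁, hy⟩, hx₂⟩ := h
    exact Prod.ext hy (U.restrict_compl_injective (π := fun _ => β) (Prod.ext hx₁ hx₂))
  have hXY : ent p (fun ω => ((joint X U ω, Y ω), joint X Uᶜ ω)) =
      ent p (fun ω => (Y ω, fun i => X i ω)) :=
    (ent_comp_of_injective p hg fun ω => (Y ω, fun i => X i ω) :)
  simp only [condMI, condEnt, hX, hXY]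
  ring

end Entropy

/-- With `(X_v)` mutually independent and the `Ŷ_w` conditionally independent given
`X_{O_l}`, the function `(U, W) ↦ I(X_U ; Ŷ_W | X_{O_l \ U})` is bisubmodular. -/
theorem stmt4 {Ω ι₁ ι₂ β γ : Type} [Fintype Ω] [Fintype ι₁] [DecidableEq ι₁]
    [Fintype ι₂] [DecidableEq ι₂] [Fintype β] [DecidableEq β] [Fintype γ] [DecidableEq γ]
    (p : Ω → ℝ) (hp : ∀ ω, 0 ≤ p ω) (hp1 : ∑ ω, p ω = 1)
    (X : ι₁ → Ω → β) (Yh : ι₂ → Ω → γ)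
    (hindep : ∀ x : ι₁ → β, prOf p (fun ω i => X i ω) x = ∏ i, prOf p (X i) (x i))
    (hcond : ∀ W : Finset ι₂, condEnt p (joint Yh W) (fun ω i => X i ω) =
        ∑ w ∈ W, condEnt p (Yh w) (fun ω i => X i ω))
    (U₁ U₂ : Finset ι₁) (W₁ W₂ : Finset ι₂) :
    condMI p (joint X (U₁ ∪ U₂)) (joint Yh (W₁ ∩ W₂)) (joint X (U₁ ∪ U₂)ᶜ) +
      condMI p (joint X (U₁ ∩ U₂)) (joint Yh (W₁ ∪ W₂)) (joint X (U₁ ∩ U₂)ᶜ) ≤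
    condMI p (joint X U₁) (joint Yh W₁) (joint X U₁ᶜ) +
      condMI p (joint X U₂) (joint Yh W₂) (joint X U₂ᶜ) := by
  have hI : ∀ U W, condMI p (joint X U) (joint Yh W) (joint X Uᶜ) =
      ent p (fun ω => (joint Yh W ω, joint X Uᶜ ω)) - ∑ i ∈ Uᶜ, ent p (X i) -
        ∑ w ∈ W, condEnt p (Yh w) (fun ω i => X i ω) := fun U W => by
    rw [condMI_joint_compl, hcond, condEnt, ent_joint_eq_sum p hp1 X hindep]
  rw [hI, hI, hI, hI, compl_union, compl_inter]
  have hent := ent_joint_prodMk_submodular p hp hp1 Yh X W₁ W₂ U₁ᶜ U₂ᶜ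
  have hX := sum_union_inter (s₁ := U₁ᶜ) (s₂ := U₂ᶜ) (f := fun i => ent p (X i))
  have hY := sum_union_inter (s₁ := W₁) (s₂ := W₂) (f := fun w => condEnt p (Yh w) fun ω i => X i ω)
  linarith

end
end

section
/- Let V = O₁ ∪ … ∪ O_L be a layered node set with bisubmodular, non-decreasing capacity functions ρ_l vanishing when either argument is empty, |O₁| = |O_L| = 1 with source S and destination D. Then the maximum value of f(S) over node-flows f equals the minimum cut: max{ f(S) : f a feasible node-flow } = min_{Ω ⊆ V, S∈Ω, D∉Ω} C(Ω). -/
/-!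
Induction on the number of layers, peeling off the last one. Generalise the sink to a
submodular, monotone price `φ` on the subsets of the last layer `B`, a cut `Ω` paying
`φ (Ω ∩ B)`. One layer back, the price becomes `φ' U = min_{T ⊆ B} (ρ (U, B \ T) + φ T)`,
again submodular and monotone by the bisubmodularity of `ρ`. A flow `f` of value `c` that
respects `φ'` extends across `B` by Frank's discrete sandwich theorem: the amounts that layer `A`
can deliver form the submodular bound `W ↦ min_U (f U + ρ (A \ U, W))`, the amounts the
price demands form the supermodular bound `W ↦ max 0 (c - φ (B \ W))`, and respecting `φ'`
says exactly that the second lies below the first. Splicing a minimising `T` into a cut of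
value `c` for `φ'` gives one for `φ`. Conversely, telescoping the flow outside a cut bounds
every flow by every cut.
-/

open Finset

section SetFunctions

variable {α : Type*} {s t : Finset α}

noncomputable def subsetsInf (s : Finset α) (F : Finset α → ℝ) : ℝ :=
  s.powerset.inf' s.powerset_nonempty F

theorem subsetsInf_le {F : Finset α → ℝ} {U : Finset α} (hU : U ⊆ s) : subsetsInf s F ≤ F U :=
  inf'_le F (mem_powerset.2 hU)

theorem le_subsetsInf {F : Finset α → ℝ} {c : ℝ} (h : ∀ U ⊆ s, c ≤ F U) : c ≤ subsetsInf s F :=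
  le_inf' _ F fun U hU => h U (mem_powerset.1 hU)

theorem exists_subsetsInf_eq (s : Finset α) (F : Finset α → ℝ) :
    ∃ U ⊆ s, subsetsInf s F = F U := by
  obtain ⟨U, hU, h⟩ := exists_mem_eq_inf' s.powerset_nonempty F
  exact ⟨U, mem_powerset.1 hU, h⟩

variable [DecidableEq α] {e : α}

def SubmodularOn (s : Finset α) (f : Finset α → ℝ) : Prop :=
  ∀ ⦃A⦄, A ⊆ s → ∀ ⦃B⦄, B ⊆ s → f (A ∪ B) + f (A ∩ B) ≤ f A + f B

def SupermodularOn (s : Finset α) (f : Finset α → ℝ) : Prop :=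
  ∀ ⦃A⦄, A ⊆ s → ∀ ⦃B⦄, B ⊆ s → f A + f B ≤ f (A ∪ B) + f (A ∩ B)

def BisubmodularOn (s t : Finset α) (ρ : Finset α → Finset α → ℝ) : Prop :=
  ∀ U₁ U₂ W₁ W₂, U₁ ⊆ s → U₂ ⊆ s → W₁ ⊆ t → W₂ ⊆ t →
    ρ (U₁ ∪ U₂) (W₁ ∩ W₂) + ρ (U₁ ∩ U₂) (W₁ ∪ W₂) ≤ ρ U₁ W₁ + ρ U₂ W₂

theorem SubmodularOn.neg {f : Finset α → ℝ} (hf : SubmodularOn s f) : SupermodularOn s (-f) :=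
  fun _ hA _ hB => by simp only [Pi.neg_apply]; linarith [hf hA hB]

theorem SupermodularOn.neg {f : Finset α → ℝ} (hf : SupermodularOn s f) : SubmodularOn s (-f) :=
  fun _ hA _ hB => by simp only [Pi.neg_apply]; linarith [hf hA hB]

theorem SupermodularOn.max_insert {p : Finset α → ℝ} (hp : SupermodularOn (insert e s) p)
    (he : e ∉ s) (r : ℝ) : SupermodularOn s fun A => max (p A) (p (insert e A) - r) := by
  intro A hA B hB
  have heA : e ∉ A := fun h => he (hA h)
  have heB : e ∉ B := fun h => he (hB h)
  have hA' := hA.trans (subset_insert e s)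
  have hB' := hB.trans (subset_insert e s)
  have h₁ := hp hA' hB'
  have h₂ := hp hA' (insert_subset_insert e hB)
  have h₃ := hp (insert_subset_insert e hA) hB'
  have h₄ := hp (insert_subset_insert e hA) (insert_subset_insert e hB)
  rw [union_insert, inter_insert_of_notMem heA] at h₂
  rw [insert_union, insert_inter_of_notMem heB] at h₃
  rw [← insert_union_distrib, ← insert_inter_distrib] at h₄
  have := le_max_left (p (A ∪ B)) (p (insert e (A ∪ B)) - r)
  have := le_max_right (p (A ∪ B)) (p (insert e (A ∪ B)) - r)
  have := le_max_left (p (A ∩ B)) (p (insert e (A ∩ B)) - r)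
  have := le_max_right (p (A ∩ B)) (p (insert e (A ∩ B)) - r)
  rcases max_choice (p A) (p (insert e A) - r) with hmA | hmA <;>
    rcases max_choice (p B) (p (insert e B) - r) with hmB | hmB <;>
    simp only [hmA, hmB] <;> linarith

theorem SubmodularOn.min_insert {b : Finset α → ℝ} (hb : SubmodularOn (insert e s) b)
    (he : e ∉ s) (r : ℝ) : SubmodularOn s fun A => min (b A) (b (insert e A) - r) := by
  convert (hb.neg.max_insert he (-r)).neg using 1
  funext A
  simp only [Pi.neg_apply, sub_neg_eq_add]
  rw [neg_add_eq_sub, ← neg_sub (b (insert e A)) r, max_neg_neg, neg_neg]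

theorem exists_threshold_insert {p b : Finset α → ℝ} (hp : SupermodularOn (insert e s) p)
    (hb : SubmodularOn (insert e s) b) (hpb : ∀ A ⊆ insert e s, p A ≤ b A) (he : e ∉ s) :
    ∃ r, ∀ A ⊆ s, p (insert e A) - b A ≤ r ∧ r ≤ b (insert e A) - p A := by
  have cross : ∀ A ⊆ s, ∀ A' ⊆ s, p (insert e A') - b A' ≤ b (insert e A) - p A := by
    intro A hA A' hA'
    have hs := subset_insert e s
    have h₁ := hp (insert_subset_insert e hA') (hA.trans hs)
    have h₂ := hb (insert_subset_insert e hA) (hA'.trans hs)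
    rw [insert_union, insert_inter_of_notMem fun h => he (hA h)] at h₁
    rw [insert_union, insert_inter_of_notMem fun h => he (hA' h), union_comm, inter_comm] at h₂
    have h₃ := hpb _ (insert_subset_insert e (union_subset hA' hA))
    have h₄ := hpb (A' ∩ A) ((inter_subset_left.trans hA').trans hs)
    linarith
  refine ⟨s.powerset.sup' s.powerset_nonempty fun A' => p (insert e A') - b A',
    fun A hA => ⟨le_sup' (fun A' => p (insert e A') - b A') (mem_powerset.2 hA), ?_⟩⟩
  exact sup'_le _ _ fun A' hA' => cross A hA A' (mem_powerset.1 hA')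

theorem exists_modular_between {E : Finset α} :
    ∀ {p b : Finset α → ℝ}, SupermodularOn E p → SubmodularOn E b → (∀ A ⊆ E, p A ≤ b A) →
      p ∅ = 0 → b ∅ = 0 → ∃ x : α → ℝ, ∀ A ⊆ E, p A ≤ ∑ a ∈ A, x a ∧ ∑ a ∈ A, x a ≤ b A := by
  induction E using Finset.induction_on with
  | empty =>
    intro p b _ _ _ hp0 hb0
    exact ⟨0, fun A hA => by simp [subset_empty.1 hA, hp0, hb0]⟩
  | insert e s he ih =>
    intro p b hp hb hpb hp0 hb0
    obtain ⟨r, hr⟩ := exists_threshold_insert hp hb hpb he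
    have hpb' : ∀ A ⊆ s, max (p A) (p (insert e A) - r) ≤ min (b A) (b (insert e A) - r) := by
      intro A hA
      have := hpb A (hA.trans (subset_insert e s))
      have := hpb _ (insert_subset_insert e hA)
      have := hr A hA
      simp only [max_le_iff, le_min_iff]
      refine ⟨⟨?_, ?_⟩, ?_, ?_⟩ <;> linarith
    have hp0' : max (p ∅) (p (insert e ∅) - r) = 0 := by
      have := (hr ∅ (empty_subset s)).1
      rw [hp0, hb0] at *
      exact max_eq_left (by linarith)
    have hb0' : min (b ∅) (b (insert e ∅) - r) = 0 := by
      have := (hr ∅ (empty_subset s)).2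
      rw [hp0, hb0] at *
      exact min_eq_left (by linarith)
    obtain ⟨x, hx⟩ := ih (hp.max_insert he r) (hb.min_insert he r) hpb' hp0' hb0'
    have hsum : ∀ A ⊆ s, ∑ a ∈ A, Function.update x e r a = ∑ a ∈ A, x a :=
      fun A hA => sum_update_of_notMem (fun h => he (hA h)) x r
    refine ⟨Function.update x e r, fun A hA => ?_⟩
    by_cases heA : e ∈ A
    · have hA' : A.erase e ⊆ s := subset_insert_iff.1 hA
      rw [← insert_erase heA, sum_insert (notMem_erase e A), Function.update_self, hsum _ hA']
      have := hx _ hA'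
      have := le_max_right (p (A.erase e)) (p (insert e (A.erase e)) - r)
      have := min_le_right (b (A.erase e)) (b (insert e (A.erase e)) - r)
      constructor <;> linarith
    · have hA' : A ⊆ s := (subset_insert_iff_of_notMem heA).1 hA
      rw [hsum A hA']
      obtain ⟨h₁, h₂⟩ := hx A hA'
      exact ⟨(le_max_left _ _).trans h₁, h₂.trans (min_le_left _ _)⟩

theorem submodularOn_subsetsInf {F : Finset α → Finset α → ℝ}
    (hF : ∀ U₁ U₂ W₁ W₂, U₁ ⊆ s → U₂ ⊆ s → W₁ ⊆ t → W₂ ⊆ t →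
      F (U₁ ∪ U₂) (W₁ ∪ W₂) + F (U₁ ∩ U₂) (W₁ ∩ W₂) ≤ F U₁ W₁ + F U₂ W₂) :
    SubmodularOn t fun W => subsetsInf s (F · W) := by
  intro W₁ hW₁ W₂ hW₂
  obtain ⟨U₁, hU₁, h₁⟩ := exists_subsetsInf_eq s (F · W₁)
  obtain ⟨U₂, hU₂, h₂⟩ := exists_subsetsInf_eq s (F · W₂)
  have := subsetsInf_le (F := (F · (W₁ ∪ W₂))) (union_subset hU₁ hU₂)
  have := subsetsInf_le (F := (F · (W₁ ∩ W₂))) (U := U₁ ∩ U₂) (inter_subset_left.trans hU₁)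
  linarith [hF U₁ U₂ W₁ W₂ hU₁ hU₂ hW₁ hW₂]

noncomputable def contractCapacity (ρ : Finset α → Finset α → ℝ) (B : Finset α)
    (φ : Finset α → ℝ) (U : Finset α) : ℝ :=
  subsetsInf B fun T => ρ U (B \ T) + φ T

theorem submodularOn_contractCapacity {A B : Finset α} {ρ : Finset α → Finset α → ℝ}
    {φ : Finset α → ℝ} (hρ : BisubmodularOn A B ρ) (hφ : SubmodularOn B φ) :
    SubmodularOn A (contractCapacity ρ B φ) :=
  submodularOn_subsetsInf (F := fun T U => ρ U (B \ T) + φ T)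
    fun T₁ T₂ U₁ U₂ hT₁ hT₂ hU₁ hU₂ => by
      have := hρ U₁ U₂ (B \ T₁) (B \ T₂) hU₁ hU₂ sdiff_subset sdiff_subset
      rw [← sdiff_union_distrib, ← sdiff_inter_distrib_right] at this
      linarith [hφ hT₁ hT₂]

theorem monotoneOn_contractCapacity {A B : Finset α} {ρ : Finset α → Finset α → ℝ}
    {φ : Finset α → ℝ} (hρ : ∀ U U₁ W, U ⊆ U₁ → U₁ ⊆ A → W ⊆ B → ρ U W ≤ ρ U₁ W) :
    MonotoneOn (contractCapacity ρ B φ) {U | U ⊆ A} :=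
  fun U _ U₁ hU₁ h => le_subsetsInf fun T hT =>
    (subsetsInf_le hT).trans (add_le_add (hρ U U₁ (B \ T) h hU₁ sdiff_subset) le_rfl)

theorem SubmodularOn.supermodularOn_max_zero_sub_compl {φ : Finset α → ℝ} (hφ : SubmodularOn s φ)
    (hφm : MonotoneOn φ {T | T ⊆ s}) (c : ℝ) :
    SupermodularOn s fun A => max 0 (c - φ (s \ A)) := by
  intro A hA B hB
  have hsub := hφ (sdiff_subset : s \ A ⊆ s) (sdiff_subset : s \ B ⊆ s)
  rw [← sdiff_inter_distrib_right, ← sdiff_union_distrib] at hsub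
  have hmA : φ (s \ (A ∪ B)) ≤ φ (s \ A) :=
    hφm sdiff_subset sdiff_subset (sdiff_subset_sdiff subset_rfl subset_union_left)
  have hmB : φ (s \ (A ∪ B)) ≤ φ (s \ B) :=
    hφm sdiff_subset sdiff_subset (sdiff_subset_sdiff subset_rfl subset_union_right)
  have := le_max_left 0 (c - φ (s \ (A ∪ B)))
  have := le_max_right 0 (c - φ (s \ (A ∪ B)))
  have := le_max_left 0 (c - φ (s \ (A ∩ B)))
  have := le_max_right 0 (c - φ (s \ (A ∩ B)))
  rcases max_choice 0 (c - φ (s \ A)) with h₁ | h₁ <;>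
    rcases max_choice 0 (c - φ (s \ B)) with h₂ | h₂ <;>
    simp only [h₁, h₂] <;> linarith

theorem sum_piecewise_of_subset {f g : α → ℝ} {A : Finset α} (h : A ⊆ s) :
    ∑ v ∈ A, s.piecewise f g v = ∑ v ∈ A, f v :=
  sum_congr rfl fun _ hv => piecewise_eq_of_mem _ _ _ (h hv)

theorem sum_piecewise_of_disjoint {f g : α → ℝ} {A : Finset α} (h : Disjoint A s) :
    ∑ v ∈ A, s.piecewise f g v = ∑ v ∈ A, g v :=
  sum_congr rfl fun _ hv => piecewise_eq_of_notMem _ _ _ (disjoint_left.1 h hv)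

theorem exists_modular_between_supply_demand {A B : Finset α} {ρ : Finset α → Finset α → ℝ}
    {φ : Finset α → ℝ} {f : α → ℝ} {c : ℝ} (hρ : BisubmodularOn A B ρ)
    (hρ0 : ∀ U W, 0 ≤ ρ U W) (hρ_empty : ∀ U, ρ U ∅ = 0) (hφ : SubmodularOn B φ)
    (hφm : MonotoneOn φ {T | T ⊆ B}) (hf : ∀ v, 0 ≤ f v)
    (hc : ∀ U ⊆ A, ∀ T ⊆ B, c - ∑ v ∈ A \ U, f v ≤ ρ U (B \ T) + φ T) :
    ∃ x : α → ℝ, ∀ W ⊆ B, max 0 (c - φ (B \ W)) ≤ ∑ w ∈ W, x w ∧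
      ∑ w ∈ W, x w ≤ subsetsInf A fun U => ∑ v ∈ U, f v + ρ (A \ U) W := by
  refine exists_modular_between (hφ.supermodularOn_max_zero_sub_compl hφm c)
    (submodularOn_subsetsInf fun U₁ U₂ W₁ W₂ _ _ hW₁ hW₂ => ?_) (fun W hW => ?_) ?_ ?_
  · have := hρ (A \ U₁) (A \ U₂) W₁ W₂ sdiff_subset sdiff_subset hW₁ hW₂
    rw [sdiff_union_distrib, sdiff_inter_distrib_right]
    linarith [sum_union_inter (s₁ := U₁) (s₂ := U₂) (f := f)]
  · refine max_le (le_subsetsInf fun U _ => ?_) (le_subsetsInf fun U hU => ?_)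
    · exact add_nonneg (sum_nonneg fun v _ => hf v) (hρ0 _ _)
    · have := hc (A \ U) sdiff_subset (B \ W) sdiff_subset
      rw [Finset.sdiff_sdiff_eq_self hU, Finset.sdiff_sdiff_eq_self hW] at this
      linarith
  · have hcB : c ≤ φ B := by simpa [hρ_empty] using hc A subset_rfl B subset_rfl
    rw [sdiff_empty]
    exact max_eq_left (by linarith)
  · refine le_antisymm ((subsetsInf_le (empty_subset A)).trans (by simp [hρ_empty]))
      (le_subsetsInf fun U _ => ?_)
    rw [hρ_empty, add_zero]
    exact sum_nonneg fun v _ => hf v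

theorem exists_extension {A B : Finset α} {ρ : Finset α → Finset α → ℝ} {φ : Finset α → ℝ}
    {f : α → ℝ} {c : ℝ} (hAB : Disjoint A B) (hρ : BisubmodularOn A B ρ)
    (hρ0 : ∀ U W, 0 ≤ ρ U W) (hρ_empty : ∀ U, ρ U ∅ = 0) (hφ : SubmodularOn B φ)
    (hφm : MonotoneOn φ {T | T ⊆ B}) (hf : ∀ v, 0 ≤ f v)
    (hc : ∀ U ⊆ A, ∀ T ⊆ B, c - ∑ v ∈ A \ U, f v ≤ ρ U (B \ T) + φ T) :
    ∃ g : α → ℝ, (∀ v, 0 ≤ g v) ∧ (∀ v ∉ B, g v = f v) ∧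
      (∀ U ⊆ A, ∀ W ⊆ B, ∑ w ∈ W, g w - ∑ v ∈ A \ U, g v ≤ ρ U W) ∧
      (∀ T ⊆ B, c - ∑ v ∈ B \ T, g v ≤ φ T) := by
  obtain ⟨x, hx⟩ := exists_modular_between_supply_demand hρ hρ0 hρ_empty hφ hφm hf hc
  refine ⟨B.piecewise x f, fun v => ?_, fun v hv => piecewise_eq_of_notMem _ _ _ hv,
    fun U hU W hW => ?_, fun T hT => ?_⟩
  · by_cases hv : v ∈ B
    · have := (hx {v} (singleton_subset_iff.2 hv)).1
      rw [sum_singleton] at this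
      rw [piecewise_eq_of_mem _ _ _ hv]
      exact (le_max_left _ _).trans this
    · rw [piecewise_eq_of_notMem _ _ _ hv]
      exact hf v
  · rw [sum_piecewise_of_subset hW,
      sum_piecewise_of_disjoint (disjoint_of_subset_left sdiff_subset hAB)]
    have := subsetsInf_le (F := fun U' => ∑ v ∈ U', f v + ρ (A \ U') W) (sdiff_subset : A \ U ⊆ A)
    rw [Finset.sdiff_sdiff_eq_self hU] at this
    linarith [(hx W hW).2]
  · rw [sum_piecewise_of_subset sdiff_subset]
    have := (hx (B \ T) sdiff_subset).1
    rw [Finset.sdiff_sdiff_eq_self hT] at this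
    linarith [le_max_right 0 (c - φ T)]

end SetFunctions

theorem isGreatest_csInf_of_forall_le {β : Type*} [ConditionallyCompleteLattice β]
    {A B : Set β} {x : β} (hA : x ∈ A) (hB : x ∈ B)
    (h : ∀ a ∈ A, ∀ b ∈ B, a ≤ b) : IsGreatest A (sInf B) := by
  rw [IsLeast.csInf_eq ⟨hB, fun b hb => h x hA b hb⟩]
  exact ⟨hA, fun a ha => h a ha x hB⟩

section LayeredNetwork

variable {V : Type*} [DecidableEq V] {O : ℕ → Finset V} {ρ : ℕ → Finset V → Finset V → ℝ}

def LayerFeasible (O : ℕ → Finset V) (ρ : ℕ → Finset V → Finset V → ℝ) (f : V → ℝ) (l : ℕ) :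
    Prop :=
  ∀ U ⊆ O l, ∀ W ⊆ O (l + 1), ∑ w ∈ W, f w - ∑ v ∈ O l \ U, f v ≤ ρ l U W

def cutValue (O : ℕ → Finset V) (ρ : ℕ → Finset V → Finset V → ℝ) (n : ℕ) (Ω : Finset V) : ℝ :=
  ∑ l ∈ Ico 1 n, ρ l (Ω ∩ O l) (O (l + 1) \ Ω)

theorem LayerFeasible.congr {f g : V → ℝ} {l : ℕ} (hf : LayerFeasible O ρ f l)
    (h : ∀ v ∈ O l ∪ O (l + 1), g v = f v) : LayerFeasible O ρ g l := by
  intro U hU W hW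
  rw [sum_congr rfl fun v hv => h v (mem_union_right _ (hW hv)),
    sum_congr rfl fun v hv => h v (mem_union_left _ (sdiff_subset hv))]
  exact hf U hU W hW

theorem le_cutValue {L : ℕ} (hL : 1 ≤ L) {S D : V} (hS : O 1 = {S}) (hD : O L = {D})
    {f : V → ℝ} (hfSD : f S = f D) (hf : ∀ l, 1 ≤ l → l ≤ L - 1 → LayerFeasible O ρ f l)
    {Ω : Finset V} (hSΩ : S ∈ Ω) (hDΩ : D ∉ Ω) : f S ≤ cutValue O ρ L Ω := by
  have hstep : ∀ l ∈ Ico 1 L, ∑ v ∈ O (l + 1) \ Ω, f v - ∑ v ∈ O l \ Ω, f v ≤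
      ρ l (Ω ∩ O l) (O (l + 1) \ Ω) := by
    intro l hl
    have hl' := mem_Ico.1 hl
    have h := hf l hl'.1 (by omega) (Ω ∩ O l) inter_subset_right (O (l + 1) \ Ω) sdiff_subset
    rwa [sdiff_inter_self_right] at h
  calc f S = ∑ v ∈ O L \ Ω, f v - ∑ v ∈ O 1 \ Ω, f v := by
        rw [hS, hD, sdiff_eq_empty_iff_subset.2 (singleton_subset_iff.2 hSΩ),
          sdiff_eq_self_of_disjoint (disjoint_singleton_left.2 hDΩ), sum_singleton, sum_empty,
          sub_zero, hfSD]
    _ = ∑ l ∈ Ico 1 L, (∑ v ∈ O (l + 1) \ Ω, f v - ∑ v ∈ O l \ Ω, f v) :=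
      (sum_Ico_sub (fun l => ∑ v ∈ O l \ Ω, f v) hL).symm
    _ ≤ cutValue O ρ L Ω := sum_le_sum hstep

theorem cutValue_splice (hdisj : ∀ i j, i ≠ j → Disjoint (O i) (O j)) {n : ℕ} (hn : 1 ≤ n)
    (Ω : Finset V) {T : Finset V} (hT : T ⊆ O (n + 1)) :
    cutValue O ρ (n + 1) (Ω \ O (n + 1) ∪ T) =
      cutValue O ρ n Ω + ρ n (Ω ∩ O n) (O (n + 1) \ T) := by
  have hmem : ∀ k ≤ n, ∀ v ∈ O k, (v ∈ Ω \ O (n + 1) ∪ T ↔ v ∈ Ω) := by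
    intro k hk v hv
    have hv' : v ∉ O (n + 1) := disjoint_left.1 (hdisj k (n + 1) (by omega)) hv
    simp only [mem_union, mem_sdiff]
    exact ⟨fun h => h.elim And.left fun h' => absurd (hT h') hv', fun h => Or.inl ⟨h, hv'⟩⟩
  have hinter : ∀ k ≤ n, (Ω \ O (n + 1) ∪ T) ∩ O k = Ω ∩ O k := fun k hk => by
    ext v
    rw [mem_inter, mem_inter]
    exact and_congr_left (hmem k hk v)
  have hsdiff : ∀ k ≤ n, O k \ (Ω \ O (n + 1) ∪ T) = O k \ Ω := fun k hk => by
    ext v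
    rw [mem_sdiff, mem_sdiff]
    exact and_congr_right fun hv => not_congr (hmem k hk v hv)
  have hlast : O (n + 1) \ (Ω \ O (n + 1) ∪ T) = O (n + 1) \ T := by
    rw [sdiff_union_distrib, sdiff_eq_self_of_disjoint disjoint_sdiff,
      inter_eq_right.2 sdiff_subset]
  rw [cutValue, sum_Ico_succ_top hn, hinter n le_rfl, hlast, cutValue]
  congr 1
  refine sum_congr rfl fun l hl => ?_
  have hl' := mem_Ico.1 hl
  rw [hinter l (by omega), hsdiff (l + 1) (by omega)]

theorem exists_flow_eq_cutValue_add {S : V} (hdisj : ∀ i j, i ≠ j → Disjoint (O i) (O j))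
    (hS : O 1 = {S}) (hρ0 : ∀ l U W, 0 ≤ ρ l U W)
    (hbi : ∀ l, BisubmodularOn (O l) (O (l + 1)) (ρ l))
    (hmono : ∀ l U U₁ W, U ⊆ U₁ → U₁ ⊆ O l → W ⊆ O (l + 1) → ρ l U W ≤ ρ l U₁ W)
    (hempty : ∀ l U, ρ l U ∅ = 0) {n : ℕ} (hn : 1 ≤ n) :
    ∀ φ : Finset V → ℝ, SubmodularOn (O n) φ → MonotoneOn φ {T | T ⊆ O n} → 0 ≤ φ ∅ →
      ∃ f : V → ℝ, (∀ v, 0 ≤ f v) ∧ (∀ l ∈ Ico 1 n, LayerFeasible O ρ f l) ∧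
        (∀ T ⊆ O n, f S - ∑ v ∈ O n \ T, f v ≤ φ T) ∧
        ∃ Ω, S ∈ Ω ∧ f S = cutValue O ρ n Ω + φ (Ω ∩ O n) := by
  induction n, hn using Nat.le_induction with
  | base =>
    intro φ _ hφm hφ0
    rw [hS] at hφm ⊢
    have hφS : 0 ≤ φ {S} := hφ0.trans (hφm (empty_subset _) (Subset.refl _) (empty_subset _))
    refine ⟨Pi.single S (φ {S}), fun v => ?_, by simp, fun T hT => ?_, {S},
      mem_singleton_self S, by simp [cutValue]⟩
    · by_cases hv : v = S <;> simp [hv, hφS]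
    · rcases subset_singleton_iff.1 hT with rfl | rfl <;> simp [hφ0]
  | succ n hn ih =>
    intro φ hφ hφm hφ0
    have hφ' : 0 ≤ contractCapacity (ρ n) (O (n + 1)) φ ∅ := le_subsetsInf fun T hT =>
      add_nonneg (hρ0 _ _ _) (hφ0.trans (hφm (empty_subset _) hT (empty_subset T)))
    obtain ⟨f, hf0, hf, hfφ', Ω, hSΩ, hfΩ⟩ := ih _ (submodularOn_contractCapacity (hbi n) hφ)
      (monotoneOn_contractCapacity (hmono n)) hφ'
    have hdisj' : ∀ k ≤ n, Disjoint (O k) (O (n + 1)) := fun k hk => hdisj k (n + 1) (by omega)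
    obtain ⟨g, hg0, hgf, hg, hgφ⟩ := exists_extension (hdisj' n le_rfl) (hbi n) (hρ0 n)
      (hempty n) hφ hφm hf0 fun U hU T hT => (hfφ' U hU).trans (subsetsInf_le hT)
    have hSn : S ∉ O (n + 1) := disjoint_left.1 (hdisj' 1 hn) (by simp [hS])
    obtain ⟨T, hT, hTmin⟩ :=
      exists_subsetsInf_eq (O (n + 1)) fun T => ρ n (Ω ∩ O n) (O (n + 1) \ T) + φ T
    refine ⟨g, hg0, fun l hl => ?_, fun T hT => hgf S hSn ▸ hgφ T hT,
      Ω \ O (n + 1) ∪ T, mem_union_left _ (mem_sdiff.2 ⟨hSΩ, hSn⟩), ?_⟩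
    · obtain ⟨hl₁, hln⟩ | rfl : (1 ≤ l ∧ l < n) ∨ l = n := by have := mem_Ico.1 hl; omega
      · refine (hf l (mem_Ico.2 ⟨hl₁, hln⟩)).congr fun v hv => hgf v ?_
        rcases mem_union.1 hv with hv | hv
        · exact disjoint_left.1 (hdisj' l (by omega)) hv
        · exact disjoint_left.1 (hdisj' (l + 1) (by omega)) hv
      · exact hg
    · rw [cutValue_splice hdisj hn Ω hT, union_inter_distrib_right, sdiff_inter_self, empty_union,
        inter_eq_left.2 hT, hgf S hSn, hfΩ, contractCapacity, hTmin, add_assoc]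

theorem exists_flow_eq_cutValue {L : ℕ} (hL : 2 ≤ L) {S D : V}
    (hdisj : ∀ i j, i ≠ j → Disjoint (O i) (O j)) (hS : O 1 = {S}) (hD : O L = {D})
    (hρ0 : ∀ l U W, 0 ≤ ρ l U W) (hbi : ∀ l, BisubmodularOn (O l) (O (l + 1)) (ρ l))
    (hmono : ∀ l U U₁ W, U ⊆ U₁ → U₁ ⊆ O l → W ⊆ O (l + 1) → ρ l U W ≤ ρ l U₁ W)
    (hempty : ∀ l U, ρ l U ∅ = 0) :
    ∃ f : V → ℝ, (∀ v, 0 ≤ f v) ∧ f S = f D ∧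
      (∀ l, 1 ≤ l → l ≤ L - 1 → LayerFeasible O ρ f l) ∧
      ∃ Ω, S ∈ Ω ∧ D ∉ Ω ∧ f S = cutValue O ρ L Ω := by
  obtain ⟨n, rfl⟩ : ∃ n, L = n + 1 := ⟨L - 1, by omega⟩
  have hn : 1 ≤ n := by omega
  have hDO : {D} ⊆ O (n + 1) := hD.symm.subset
  have hDn : ∀ l ≤ n, D ∉ O l := fun l hl h =>
    disjoint_left.1 (hdisj l (n + 1) (by omega)) h (hDO (mem_singleton_self D))
  have hSD : S ≠ D := fun h => hDn 1 hn (by simp [hS, h])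
  obtain ⟨f, hf0, hf, hfD, Ω, hSΩ, hfΩ⟩ :=
    exists_flow_eq_cutValue_add hdisj hS hρ0 hbi hmono hempty hn (ρ n · {D})
      (fun U₁ h₁ U₂ h₂ => by simpa using hbi n U₁ U₂ {D} {D} h₁ h₂ hDO hDO)
      (fun U _ U₁ hU₁ h => hmono n U U₁ {D} h hU₁ hDO) (hρ0 n ∅ {D})
  refine ⟨Function.update f D (f S), fun v => ?_, by simp [Function.update_of_ne hSD],
    fun l hl₁ hl₂ => ?_, Ω \ O (n + 1), mem_sdiff.2 ⟨hSΩ, fun h => hSD (by simpa [hD] using h)⟩,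
    fun h => (mem_sdiff.1 h).2 (hDO (mem_singleton_self D)), ?_⟩
  · by_cases hv : v = D <;> simp [hv, hf0]
  · obtain hln | rfl : l < n ∨ l = n := by omega
    · refine (hf l (mem_Ico.2 ⟨hl₁, hln⟩)).congr fun v hv => Function.update_of_ne ?_ _ _
      rintro rfl
      rcases mem_union.1 hv with h | h
      · exact hDn l (by omega) h
      · exact hDn (l + 1) (by omega) h
    · intro U hU W hW
      rw [sum_update_of_notMem (fun h => hDn l le_rfl (sdiff_subset h))]
      rcases subset_singleton_iff.1 (hD ▸ hW) with rfl | rfl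
      · rw [sum_empty, hempty, zero_sub, neg_nonpos]
        exact sum_nonneg fun v _ => hf0 v
      · rw [sum_singleton, Function.update_self]
        exact hfD U hU
  · have hsplice := cutValue_splice (ρ := ρ) hdisj hn Ω (empty_subset _)
    rw [union_empty, sdiff_empty] at hsplice
    rw [Function.update_of_ne hSD, hfΩ, hsplice, hD]

end LayeredNetwork

theorem stmt7_general {V : Type*} [DecidableEq V] (L : ℕ) (hL : 2 ≤ L)
    (O : ℕ → Finset V)
    (hdisj : ∀ i j, i ≠ j → Disjoint (O i) (O j))
    (S D : V) (hS : O 1 = {S}) (hD : O L = {D})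
    (ρ : ℕ → Finset V → Finset V → ℝ)
    (hρnonneg : ∀ l U W, 0 ≤ ρ l U W)
    (hbi : ∀ l, ∀ U₁ U₂ W₁ W₂ : Finset V, U₁ ⊆ O l → U₂ ⊆ O l →
      W₁ ⊆ O (l + 1) → W₂ ⊆ O (l + 1) →
      ρ l (U₁ ∪ U₂) (W₁ ∩ W₂) + ρ l (U₁ ∩ U₂) (W₁ ∪ W₂) ≤ ρ l U₁ W₁ + ρ l U₂ W₂)
    (hmono : ∀ l, ∀ U U₁ W W₁ : Finset V, U ⊆ U₁ → W ⊆ W₁ → U₁ ⊆ O l → W₁ ⊆ O (l + 1) →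
      ρ l U W ≤ ρ l U₁ W₁)
    (hempty : ∀ l, ∀ U W : Finset V, U = ∅ ∨ W = ∅ → ρ l U W = 0) :
    IsGreatest
      {r : ℝ | ∃ f : V → ℝ, (∀ v, 0 ≤ f v) ∧ f S = f D ∧
        (∀ l, 1 ≤ l → l ≤ L - 1 → ∀ U ⊆ O l, ∀ W ⊆ O (l + 1),
          ∑ w ∈ W, f w - ∑ v ∈ O l \ U, f v ≤ ρ l U W) ∧ f S = r}
      (sInf {c : ℝ | ∃ Ωs : Finset V, S ∈ Ωs ∧ D ∉ Ωs ∧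
        c = ∑ l ∈ Finset.Ico 1 L, ρ l (Ωs ∩ O l) (O (l + 1) \ Ωs)}) := by
  obtain ⟨f, hf0, hfSD, hf, Ω, hSΩ, hDΩ, hfΩ⟩ := exists_flow_eq_cutValue hL hdisj hS hD hρnonneg
    hbi (fun l U U₁ W h h₁ hW => hmono l U U₁ W W h subset_rfl h₁ hW)
    fun l U => hempty l U ∅ (Or.inr rfl)
  refine isGreatest_csInf_of_forall_le ⟨f, hf0, hfSD, hf, rfl⟩ ⟨Ω, hSΩ, hDΩ, hfΩ⟩ ?_
  rintro _ ⟨g, -, hgSD, hg, rfl⟩ _ ⟨Ω', hSΩ', hDΩ', rfl⟩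
  exact le_cutValue (by omega) hS hD hgSD hg hSΩ' hDΩ'

/-- Max-flow min-cut for single-commodity node-flows on a layered graph with
bisubmodular, non-decreasing capacity functions vanishing on empty arguments. -/
theorem stmt7 {V : Type*} [Fintype V] [DecidableEq V] (L : ℕ) (hL : 2 ≤ L)
    (O : ℕ → Finset V)
    (hdisj : ∀ i j, i ≠ j → Disjoint (O i) (O j))
    (hcover : ∀ v : V, ∃ l, 1 ≤ l ∧ l ≤ L ∧ v ∈ O l)
    (S D : V) (hS : O 1 = {S}) (hD : O L = {D})
    (ρ : ℕ → Finset V → Finset V → ℝ)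
    (hρnonneg : ∀ l U W, 0 ≤ ρ l U W)
    (hbi : ∀ l, ∀ U₁ U₂ W₁ W₂ : Finset V, U₁ ⊆ O l → U₂ ⊆ O l →
      W₁ ⊆ O (l + 1) → W₂ ⊆ O (l + 1) →
      ρ l (U₁ ∪ U₂) (W₁ ∩ W₂) + ρ l (U₁ ∩ U₂) (W₁ ∪ W₂) ≤ ρ l U₁ W₁ + ρ l U₂ W₂)
    (hmono : ∀ l, ∀ U U₁ W W₁ : Finset V, U ⊆ U₁ → W ⊆ W₁ → U₁ ⊆ O l → W₁ ⊆ O (l + 1) →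
      ρ l U W ≤ ρ l U₁ W₁)
    (hempty : ∀ l, ∀ U W : Finset V, U = ∅ ∨ W = ∅ → ρ l U W = 0) :
    IsGreatest
      {r : ℝ | ∃ f : V → ℝ, (∀ v, 0 ≤ f v) ∧ f S = f D ∧
        (∀ l, 1 ≤ l → l ≤ L - 1 → ∀ U ⊆ O l, ∀ W ⊆ O (l + 1),
          ∑ w ∈ W, f w - ∑ v ∈ O l \ U, f v ≤ ρ l U W) ∧ f S = r}
      (sInf {c : ℝ | ∃ Ωs : Finset V, S ∈ Ωs ∧ D ∉ Ωs ∧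
        c = ∑ l ∈ Finset.Ico 1 L, ρ l (Ωs ∩ O l) (O (l + 1) \ Ωs)}) :=
  stmt7_general L hL O hdisj S D hS hD ρ hρnonneg hbi hmono hempty
end

section
/- (Edmonds' polymatroid intersection, as used in the flow construction) Let r_A, r_B : 2^E → ℝ≥0 be submodular, non-decreasing functions with r_A(∅)=r_B(∅)=0 on a finite ground set E, and let P_A, P_B be the associated polymatroids. Then max{ x(E) : x ∈ P_A ∩ P_B } = min_{T ⊆ E} ( r_A(E \ T) + r_B(T) ). -/
open Finset

/-- Frank's discrete sandwich theorem on a finite ground set `G`. -/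
lemma frank_sandwich {E : Type*} [DecidableEq E] (G : Finset E) :
    ∀ (p b : Finset E → ℝ),
    (∀ X Y, X ⊆ G → Y ⊆ G → p X + p Y ≤ p (X ∪ Y) + p (X ∩ Y)) →
    (∀ X Y, X ⊆ G → Y ⊆ G → b (X ∪ Y) + b (X ∩ Y) ≤ b X + b Y) →
    (∀ S, S ⊆ G → p S ≤ b S) → p ∅ ≤ 0 → 0 ≤ b ∅ →
    ∃ c : E → ℝ, ∀ S, S ⊆ G → p S ≤ ∑ x ∈ S, c x ∧ ∑ x ∈ S, c x ≤ b S := by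
  induction G using Finset.induction_on with
  | empty =>
    intro p b _ _ _ hp0 hb0
    refine ⟨0, fun S hS => ?_⟩
    rw [Finset.subset_empty.mp hS]
    simpa using ⟨hp0, hb0⟩
  | @insert e G' he IH =>
    intro p b hsup hsub hpb hp0 hb0
    have hFne : G'.powerset.Nonempty := ⟨∅, Finset.mem_powerset.mpr (Finset.empty_subset _)⟩
    set t := min (b {e}) (G'.powerset.inf' hFne (fun S => b (insert e S) - p S)) with ht
    have hsubG : ∀ S : Finset E, S ⊆ G' → S ⊆ insert e G' :=
      fun S hS => hS.trans (Finset.subset_insert _ _)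
    have hinsG : ∀ S : Finset E, S ⊆ G' → insert e S ⊆ insert e G' :=
      fun S hS => Finset.insert_subset_insert _ hS
    have henot : ∀ S : Finset E, S ⊆ G' → e ∉ S := fun S hS hmem => he (hS hmem)
    have heG : ({e} : Finset E) ⊆ insert e G' :=
      Finset.singleton_subset_iff.mpr (Finset.mem_insert_self _ _)
    -- basic bounds on t
    have hT1 : ∀ S, S ⊆ G' → t ≤ b (insert e S) - p S := fun S hS =>
      le_trans (min_le_right _ _) (Finset.inf'_le _ (Finset.mem_powerset.mpr hS))
    have hT2 : t ≤ b {e} := min_le_left _ _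
    have hT3 : ∀ S, S ⊆ G' → p (insert e S) - b S ≤ t := by
      intro S hS
      rw [le_min_iff]
      constructor
      · have h1 : p (insert e S) ≤ b (insert e S) := hpb _ (hinsG S hS)
        have h2 : b (S ∪ {e}) + b (S ∩ {e}) ≤ b S + b {e} := hsub S {e} (hsubG S hS) heG
        have h3 : S ∪ {e} = insert e S := by
          rw [Finset.union_comm, ← Finset.insert_eq]
        have h4 : S ∩ {e} = ∅ := Finset.inter_singleton_of_notMem (henot S hS)
        rw [h3, h4] at h2
        linarith
      · apply Finset.le_inf'
        intro S' hS'
        rw [Finset.mem_powerset] at hS'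
        have h1 : p (insert e S) + p S' ≤ p (insert e S ∪ S') + p (insert e S ∩ S') :=
          hsup _ _ (hinsG S hS) (hsubG S' hS')
        rw [Finset.insert_union, Finset.insert_inter_of_notMem (henot S' hS')] at h1
        have h2 : b (insert e S' ∪ S) + b (insert e S' ∩ S) ≤ b (insert e S') + b S :=
          hsub _ _ (hinsG S' hS') (hsubG S hS)
        rw [Finset.insert_union, Finset.insert_inter_of_notMem (henot S hS),
          Finset.union_comm, Finset.inter_comm] at h2
        have h3 : p (insert e (S ∪ S')) ≤ b (insert e (S ∪ S')) :=
          hpb _ (hinsG _ (Finset.union_subset hS hS'))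
        have h4 : p (S ∩ S') ≤ b (S ∩ S') :=
          hpb _ (hsubG _ ((Finset.inter_subset_left).trans hS))
        linarith
    have hT4 : p {e} ≤ t := by
      rw [le_min_iff]
      constructor
      · exact hpb _ heG
      · apply Finset.le_inf'
        intro S' hS'
        rw [Finset.mem_powerset] at hS'
        have h1 : p {e} + p S' ≤ p ({e} ∪ S') + p ({e} ∩ S') :=
          hsup _ _ heG (hsubG S' hS')
        rw [← Finset.insert_eq, Finset.singleton_inter_of_notMem (henot S' hS')] at h1
        have h3 : p (insert e S') ≤ b (insert e S') := hpb _ (hinsG S' hS')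
        linarith
    -- contracted functions
    set p' : Finset E → ℝ := fun S => max (p S) (p (insert e S) - t) with hp'
    set b' : Finset E → ℝ := fun S => min (b S) (b (insert e S) - t) with hb'
    have hUins : ∀ X Y : Finset E, insert e X ∪ insert e Y = insert e (X ∪ Y) := by
      intro X Y
      rw [Finset.insert_union, Finset.union_insert, Finset.insert_idem]
    have hIins : ∀ X Y : Finset E, X ⊆ G' → insert e X ∩ insert e Y = insert e (X ∩ Y) := by
      intro X Y hX
      rw [Finset.insert_inter_of_mem (Finset.mem_insert_self e Y),
        Finset.inter_insert_of_notMem (henot X hX)]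
    have hp'sup : ∀ X Y, X ⊆ G' → Y ⊆ G' → p' X + p' Y ≤ p' (X ∪ Y) + p' (X ∩ Y) := by
      intro X Y hX hY
      have l1 : p (X ∪ Y) ≤ max (p (X ∪ Y)) (p (insert e (X ∪ Y)) - t) := le_max_left _ _
      have l2 : p (insert e (X ∪ Y)) - t ≤ max (p (X ∪ Y)) (p (insert e (X ∪ Y)) - t) :=
        le_max_right _ _
      have l3 : p (X ∩ Y) ≤ max (p (X ∩ Y)) (p (insert e (X ∩ Y)) - t) := le_max_left _ _
      have l4 : p (insert e (X ∩ Y)) - t ≤ max (p (X ∩ Y)) (p (insert e (X ∩ Y)) - t) :=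
        le_max_right _ _
      simp only [hp']
      rcases max_cases (p X) (p (insert e X) - t) with ⟨hx, _⟩ | ⟨hx, _⟩ <;>
        rcases max_cases (p Y) (p (insert e Y) - t) with ⟨hy, _⟩ | ⟨hy, _⟩ <;>
          rw [hx, hy]
      · have h := hsup X Y (hsubG X hX) (hsubG Y hY); linarith
      · have h := hsup X (insert e Y) (hsubG X hX) (hinsG Y hY)
        rw [Finset.union_insert, Finset.inter_insert_of_notMem (henot X hX)] at h
        linarith
      · have h := hsup (insert e X) Y (hinsG X hX) (hsubG Y hY)
        rw [Finset.insert_union, Finset.insert_inter_of_notMem (henot Y hY)] at h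
        linarith
      · have h := hsup (insert e X) (insert e Y) (hinsG X hX) (hinsG Y hY)
        rw [hUins X Y, hIins X Y hX] at h
        linarith
    have hb'sub : ∀ X Y, X ⊆ G' → Y ⊆ G' → b' (X ∪ Y) + b' (X ∩ Y) ≤ b' X + b' Y := by
      intro X Y hX hY
      have l1 : min (b (X ∪ Y)) (b (insert e (X ∪ Y)) - t) ≤ b (X ∪ Y) := min_le_left _ _
      have l2 : min (b (X ∪ Y)) (b (insert e (X ∪ Y)) - t) ≤ b (insert e (X ∪ Y)) - t :=
        min_le_right _ _
      have l3 : min (b (X ∩ Y)) (b (insert e (X ∩ Y)) - t) ≤ b (X ∩ Y) := min_le_left _ _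
      have l4 : min (b (X ∩ Y)) (b (insert e (X ∩ Y)) - t) ≤ b (insert e (X ∩ Y)) - t :=
        min_le_right _ _
      simp only [hb']
      rcases min_cases (b X) (b (insert e X) - t) with ⟨hx, _⟩ | ⟨hx, _⟩ <;>
        rcases min_cases (b Y) (b (insert e Y) - t) with ⟨hy, _⟩ | ⟨hy, _⟩ <;>
          rw [hx, hy]
      · have h := hsub X Y (hsubG X hX) (hsubG Y hY); linarith
      · have h := hsub X (insert e Y) (hsubG X hX) (hinsG Y hY)
        rw [Finset.union_insert, Finset.inter_insert_of_notMem (henot X hX)] at h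
        linarith
      · have h := hsub (insert e X) Y (hinsG X hX) (hsubG Y hY)
        rw [Finset.insert_union, Finset.insert_inter_of_notMem (henot Y hY)] at h
        linarith
      · have h := hsub (insert e X) (insert e Y) (hinsG X hX) (hinsG Y hY)
        rw [hUins X Y, hIins X Y hX] at h
        linarith
    have hp'b' : ∀ S, S ⊆ G' → p' S ≤ b' S := by
      intro S hS
      simp only [hp', hb']
      rw [max_le_iff, le_min_iff, le_min_iff]
      refine ⟨⟨hpb S (hsubG S hS), ?_⟩, ⟨?_, ?_⟩⟩
      · have := hT1 S hS; linarith
      · have := hT3 S hS; linarith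
      · have := hpb _ (hinsG S hS); linarith
    have hp'0 : p' ∅ ≤ 0 := by
      simp only [hp']
      rw [max_le_iff]
      refine ⟨hp0, ?_⟩
      have : (insert e (∅ : Finset E)) = {e} := rfl
      rw [this]
      linarith [hT4]
    have hb'0 : 0 ≤ b' ∅ := by
      simp only [hb']
      rw [le_min_iff]
      refine ⟨hb0, ?_⟩
      have : (insert e (∅ : Finset E)) = {e} := rfl
      rw [this]
      linarith [hT2]
    obtain ⟨c', hc'⟩ := IH p' b' hp'sup hb'sub hp'b' hp'0 hb'0
    refine ⟨Function.update c' e t, ?_⟩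
    intro S hS
    by_cases heS : e ∈ S
    · have hS' : S.erase e ⊆ G' := Finset.subset_insert_iff.mp hS
      have hsum' : ∑ x ∈ S.erase e, Function.update c' e t x = ∑ x ∈ S.erase e, c' x := by
        refine Finset.sum_congr rfl fun x hx => ?_
        exact Function.update_of_ne (Finset.ne_of_mem_erase hx) _ _
      have hsum : ∑ x ∈ S, Function.update c' e t x = t + ∑ x ∈ S.erase e, c' x := by
        rw [← Finset.add_sum_erase _ _ heS, hsum', Function.update_self]
      have hins : insert e (S.erase e) = S := Finset.insert_erase heS
      obtain ⟨hcl, hcu⟩ := hc' (S.erase e) hS'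
      have hl : p (insert e (S.erase e)) - t ≤ p' (S.erase e) := le_max_right _ _
      have hu : b' (S.erase e) ≤ b (insert e (S.erase e)) - t := min_le_right _ _
      rw [hins] at hl hu
      constructor
      · rw [hsum]; linarith
      · rw [hsum]; linarith
    · have hS' : S ⊆ G' := by
        intro x hx
        rcases Finset.mem_insert.mp (hS hx) with h | h
        · exact absurd (h ▸ hx) heS
        · exact h
      have hsum : ∑ x ∈ S, Function.update c' e t x = ∑ x ∈ S, c' x := by
        refine Finset.sum_congr rfl fun x hx => ?_
        exact Function.update_of_ne (fun hxe => heS (by rwa [← hxe])) _ _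
      obtain ⟨hcl, hcu⟩ := hc' S hS'
      have hl : p S ≤ p' S := le_max_left _ _
      have hu : b' S ≤ b S := min_le_left _ _
      rw [hsum]
      exact ⟨le_trans hl hcl, le_trans hcu hu⟩

/-- Edmonds' polymatroid intersection theorem:
`max { x(E) : x ∈ P_A ∩ P_B } = min_{T ⊆ E} ( r_A(E \ T) + r_B(T) )`. -/
theorem stmt11 {E : Type*} [Fintype E] [DecidableEq E]
    (rA rB : Finset E → ℝ)
    (hA0 : rA ∅ = 0) (hB0 : rB ∅ = 0)
    (hAmono : ∀ U V : Finset E, U ⊆ V → rA U ≤ rA V)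
    (hBmono : ∀ U V : Finset E, U ⊆ V → rB U ≤ rB V)
    (hAsub : ∀ U V : Finset E, rA (U ∪ V) + rA (U ∩ V) ≤ rA U + rA V)
    (hBsub : ∀ U V : Finset E, rB (U ∪ V) + rB (U ∩ V) ≤ rB U + rB V) :
    IsGreatest
      {s : ℝ | ∃ x : E → ℝ, (∀ e, 0 ≤ x e) ∧
        (∀ U : Finset E, ∑ e ∈ U, x e ≤ rA U) ∧
        (∀ U : Finset E, ∑ e ∈ U, x e ≤ rB U) ∧ s = ∑ e, x e}
      (sInf {c : ℝ | ∃ T : Finset E, c = rA Tᶜ + rB T}) := by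
  have hAnn : ∀ U : Finset E, 0 ≤ rA U := fun U => hA0 ▸ hAmono ∅ U (Finset.empty_subset U)
  have hBnn : ∀ U : Finset E, 0 ≤ rB U := fun U => hB0 ▸ hBmono ∅ U (Finset.empty_subset U)
  set M : Set ℝ := {c : ℝ | ∃ T : Finset E, c = rA Tᶜ + rB T} with hM
  have hMr : M = Set.range (fun T : Finset E => rA Tᶜ + rB T) := by
    ext c; simp [hM, eq_comm]
  have hMfin : M.Finite := by rw [hMr]; exact Set.finite_range _
  have hMne : M.Nonempty := ⟨rA ∅ᶜ + rB ∅, ⟨∅, rfl⟩⟩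
  set k := sInf M with hk
  obtain ⟨T₀, hT₀⟩ : ∃ T₀ : Finset E, k = rA T₀ᶜ + rB T₀ := hMne.csInf_mem hMfin
  have hkle : ∀ T : Finset E, k ≤ rA Tᶜ + rB T := fun T =>
    csInf_le hMfin.bddBelow ⟨T, rfl⟩
  have hknn : 0 ≤ k := by rw [hT₀]; exact add_nonneg (hAnn _) (hBnn _)
  -- the sandwich pair
  set p : Finset E → ℝ := fun S => k - rB Sᶜ with hp
  set b : Finset E → ℝ := fun S => min (rA S) k with hb
  have hpsup : ∀ X Y : Finset E, X ⊆ univ → Y ⊆ univ → p X + p Y ≤ p (X ∪ Y) + p (X ∩ Y) := by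
    intro X Y _ _
    simp only [hp]
    have h := hBsub Xᶜ Yᶜ
    rw [Finset.compl_union, Finset.compl_inter]
    linarith
  have hbsub : ∀ X Y : Finset E, X ⊆ univ → Y ⊆ univ → b (X ∪ Y) + b (X ∩ Y) ≤ b X + b Y := by
    intro X Y _ _
    simp only [hb]
    rcases le_or_gt k (rA X) with hX | hX
    · have h1 : min (rA (X ∪ Y)) k ≤ k := min_le_right _ _
      have h2 : min (rA (X ∩ Y)) k ≤ min (rA Y) k :=
        min_le_min (hAmono _ _ Finset.inter_subset_right) le_rfl
      rw [min_eq_right hX]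
      linarith
    · rcases le_or_gt k (rA Y) with hY | hY
      · have h1 : min (rA (X ∪ Y)) k ≤ k := min_le_right _ _
        have h2 : min (rA (X ∩ Y)) k ≤ min (rA X) k :=
          min_le_min (hAmono _ _ Finset.inter_subset_left) le_rfl
        rw [min_eq_right hY]
        linarith
      · rw [min_eq_left hX.le, min_eq_left hY.le]
        have h := hAsub X Y
        have h1 : min (rA (X ∪ Y)) k ≤ rA (X ∪ Y) := min_le_left _ _
        have h2 : min (rA (X ∩ Y)) k ≤ rA (X ∩ Y) := min_le_left _ _
        linarith
  have hpb : ∀ S : Finset E, S ⊆ univ → p S ≤ b S := by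
    intro S _
    simp only [hp, hb, le_min_iff]
    constructor
    · have h := hkle Sᶜ
      rw [compl_compl] at h
      linarith
    · linarith [hBnn Sᶜ]
  have hp0 : p ∅ ≤ 0 := by
    simp only [hp]
    have h := hkle univ
    rw [Finset.compl_univ, hA0] at h
    rw [Finset.compl_empty]
    linarith
  have hb0 : (0 : ℝ) ≤ b ∅ := by
    simp only [hb, hA0, le_min_iff]
    exact ⟨le_rfl, hknn⟩
  obtain ⟨c, hc⟩ := frank_sandwich (univ : Finset E) p b hpsup hbsub hpb hp0 hb0
  have hctot : ∑ x, c x = k := by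
    obtain ⟨h1, h2⟩ := hc univ (Finset.Subset.refl _)
    simp only [hp, hb, Finset.compl_univ, hB0] at h1 h2
    have h3 : min (rA univ) k ≤ k := min_le_right _ _
    linarith
  constructor
  · refine ⟨c, ?_, ?_, ?_, hctot.symm⟩
    · intro e
      obtain ⟨_, h2⟩ := hc ({e}ᶜ) (Finset.subset_univ _)
      have h3 : b ({e}ᶜ) ≤ k := min_le_right _ _
      have h4 : ∑ x ∈ {e}, c x + ∑ x ∈ ({e} : Finset E)ᶜ, c x = ∑ x, c x :=
        Finset.sum_add_sum_compl _ _
      rw [Finset.sum_singleton, hctot] at h4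
      linarith
    · intro U
      obtain ⟨_, h2⟩ := hc U (Finset.subset_univ _)
      exact le_trans h2 (min_le_left _ _)
    · intro U
      obtain ⟨h1, _⟩ := hc Uᶜ (Finset.subset_univ _)
      simp only [hp, compl_compl] at h1
      have h4 : ∑ x ∈ U, c x + ∑ x ∈ Uᶜ, c x = ∑ x, c x := Finset.sum_add_sum_compl _ _
      rw [hctot] at h4
      linarith
  · rintro s ⟨x, hx0, hxA, hxB, rfl⟩
    have h4 : ∑ e ∈ T₀ᶜ, x e + ∑ e ∈ T₀ᶜᶜ, x e = ∑ e, x e := Finset.sum_add_sum_compl _ _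
    rw [compl_compl] at h4
    have := hxA T₀ᶜ
    have := hxB T₀
    show ∑ e, x e ≤ k
    rw [hT₀]
    linarith
end

section
/- Given a value F ≥ 0 and submodular, non-decreasing functions r_A, r_B on 2^E with r_A(∅)=r_B(∅)=0, if F ≤ min_{T⊆E} ( r_A(E\T) + r_B(T) ), then there exists x ∈ ℝ^E with x ≥ 0, x(U) ≤ r_A(U) and x(U) ≤ r_B(U) for all U ⊆ E, and x(E) = F. -/
/-!
Induct on the ground set, peeling off one element `e` at a time. Putting mass `t` on `e` leaves
the residual ranks `U ↦ min (r U) (r (U ∪ {e}) - t)`, again monotone and submodular, and the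
remaining set `S` must carry `F - t`. The min–max hypothesis for the residual ranks holds as soon
as `t` is at least `F - r_A(S \ T) - r_B(T)` and at most `r_A((S \ T) ∪ {e}) + r_B(T ∪ {e}) - F`
(besides `r_A({e})`, `r_B({e})` and `F`) for all `T ⊆ S`. Submodularity of `r_A` and `r_B` applied
to two such sets `T`, `T'` (uncrossing) shows that every lower bound is below every upper bound.
-/

open Finset

theorem submodular_min {α : Type*} [Lattice α] {f g : α → ℝ}
    (hf : ∀ U V, f (U ⊔ V) + f (U ⊓ V) ≤ f U + f V)
    (hg : ∀ U V, g (U ⊔ V) + g (U ⊓ V) ≤ g U + g V)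
    (hfg : Monotone fun U => f U - g U) (U V : α) :
    min (f (U ⊔ V)) (g (U ⊔ V)) + min (f (U ⊓ V)) (g (U ⊓ V)) ≤
      min (f U) (g U) + min (f V) (g V) := by
  have hU : f (U ⊓ V) - g (U ⊓ V) ≤ f U - g U := hfg inf_le_left
  have hV : f (U ⊓ V) - g (U ⊓ V) ≤ f V - g V := hfg inf_le_right
  have := hf U V
  have := hg U V
  rcases min_cases (f U) (g U) with ⟨h₁, _⟩ | ⟨h₁, _⟩ <;>
    rcases min_cases (f V) (g V) with ⟨h₂, _⟩ | ⟨h₂, _⟩ <;>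
    rw [h₁, h₂] <;>
    linarith [min_le_left (f (U ⊔ V)) (g (U ⊔ V)), min_le_right (f (U ⊔ V)) (g (U ⊔ V)),
      min_le_left (f (U ⊓ V)) (g (U ⊓ V)), min_le_right (f (U ⊓ V)) (g (U ⊓ V))]

theorem le_min_add_min {α : Type*} [AddCommMonoid α] [LinearOrder α] [IsOrderedAddMonoid α]
    {a b c d e : α} (hbd : a ≤ b + d) (hbe : a ≤ b + e) (hcd : a ≤ c + d)
    (hce : a ≤ c + e) : a ≤ min b c + min d e := by
  rw [← min_add_add_right, ← min_add_add_left, ← min_add_add_left]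
  exact le_min (le_min hbd hbe) (le_min hcd hce)

section Polymatroid

variable {E : Type*} [DecidableEq E]

structure IsPolymatroidRank (r : Finset E → ℝ) : Prop where
  map_empty : r ∅ = 0
  mono : Monotone r
  submodular : ∀ U V, r (U ∪ V) + r (U ∩ V) ≤ r U + r V

def polymatroid (r : Finset E → ℝ) : Set (E → ℝ) :=
  {x | (∀ e, 0 ≤ x e) ∧ ∀ U, ∑ e ∈ U, x e ≤ r U}

def residualRank (r : Finset E → ℝ) (e : E) (t : ℝ) (U : Finset E) : ℝ :=
  min (r U) (r (insert e U) - t)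

namespace IsPolymatroidRank

variable {r : Finset E → ℝ}

theorem nonneg (hr : IsPolymatroidRank r) (U : Finset E) : 0 ≤ r U :=
  hr.map_empty ▸ hr.mono (empty_subset U)

theorem insert_le (hr : IsPolymatroidRank r) (e : E) (U : Finset E) :
    r (insert e U) ≤ r U + r {e} := by
  have h := hr.submodular {e} U
  rw [← insert_eq] at h
  linarith [hr.nonneg ({e} ∩ U)]

theorem insert_sub_le_insert_sub (hr : IsPolymatroidRank r) {U V : Finset E} (hUV : U ⊆ V)
    (e : E) : r (insert e V) - r V ≤ r (insert e U) - r U := by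
  by_cases heV : e ∈ V
  · rw [insert_eq_of_mem heV, sub_self, sub_nonneg]
    exact hr.mono (subset_insert e U)
  · have h := hr.submodular (insert e U) V
    rw [insert_union, union_eq_right.2 hUV, insert_inter_of_notMem heV,
      inter_eq_left.2 hUV] at h
    linarith

theorem residualRank (hr : IsPolymatroidRank r) {e : E} {t : ℝ} (ht : t ≤ r {e}) :
    IsPolymatroidRank (residualRank r e t) where
  map_empty := by
    rw [_root_.residualRank, hr.map_empty, insert_empty_eq]
    exact min_eq_left (sub_nonneg.2 ht)
  mono U V hUV :=
    min_le_min (hr.mono hUV) (sub_le_sub_right (hr.mono (insert_subset_insert e hUV)) t)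
  submodular U V := by
    refine submodular_min (g := fun U => r (insert e U) - t) hr.submodular
      (fun U V => ?_) (fun U V hUV => ?_) U V
    · have h := hr.submodular (insert e U) (insert e V)
      rw [← insert_union_distrib, ← insert_inter_distrib] at h
      change r (insert e (U ∪ V)) - t + (r (insert e (U ∩ V)) - t) ≤ _
      linarith
    · have := hr.insert_sub_le_insert_sub hUV e
      linarith

end IsPolymatroidRank

theorem update_mem_polymatroid {r : Finset E → ℝ} {e : E} {t : ℝ} {x : E → ℝ}
    (hx : x ∈ polymatroid (residualRank r e t)) (ht : 0 ≤ t) :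
    Function.update x e t ∈ polymatroid r := by
  refine ⟨fun a => ?_, fun U => ?_⟩
  · rcases eq_or_ne a e with rfl | hae
    · simpa using ht
    · simpa [hae] using hx.1 a
  · by_cases heU : e ∈ U
    · rw [sum_update_of_mem heU, sdiff_singleton_eq_erase]
      have h₁ := hx.2 (U.erase e)
      have h₂ : residualRank r e t (U.erase e) ≤ r (insert e (U.erase e)) - t :=
        min_le_right _ _
      rw [insert_erase heU] at h₂
      linarith
    · rw [sum_update_of_notMem heU]
      exact (hx.2 U).trans (min_le_left _ _)

variable {rA rB : Finset E → ℝ} {F : ℝ} {e : E} {s : Finset E}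

theorem uncrossing_bound (hA : IsPolymatroidRank rA) (hB : IsPolymatroidRank rB) (he : e ∉ s)
    (hF : ∀ T ⊆ insert e s, F ≤ rA (insert e s \ T) + rB T) {T S : Finset E} (hT : T ⊆ s)
    (hS : S ⊆ s) : 2 * F ≤ rA (s \ T) + rA (insert e (s \ S)) + rB T + rB (insert e S) := by
  have heT : e ∉ T := fun h => he (hT h)
  have hA' := hA.submodular (s \ T) (insert e (s \ S))
  have hB' := hB.submodular T (insert e S)
  rw [show s \ T ∪ insert e (s \ S) = insert e s \ (T ∩ S) by grind,
    show s \ T ∩ insert e (s \ S) = insert e s \ insert e (T ∪ S) by grind] at hA'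
  rw [union_insert, inter_insert_of_notMem heT] at hB'
  have h₁ := hF (T ∩ S) (inter_subset_left.trans (hT.trans (subset_insert e s)))
  have h₂ := hF (insert e (T ∪ S)) (insert_subset_insert e (union_subset hT hS))
  linarith

theorem exists_peel_amount (hA : IsPolymatroidRank rA) (hB : IsPolymatroidRank rB) (he : e ∉ s)
    (hF0 : 0 ≤ F) (hF : ∀ T ⊆ insert e s, F ≤ rA (insert e s \ T) + rB T) :
    ∃ t, 0 ≤ t ∧ t ≤ F ∧ t ≤ rA {e} ∧ t ≤ rB {e} ∧
      ∀ T ⊆ s, F - t ≤ residualRank rA e t (s \ T) + residualRank rB e t T := by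
  have hF' : ∀ T ⊆ s, F ≤ rA (insert e (s \ T)) + rB T ∧ F ≤ rA (s \ T) + rB (insert e T) := by
    intro T hT
    have heT : e ∉ T := fun h => he (hT h)
    constructor
    · simpa only [insert_sdiff_of_notMem s heT] using hF T (hT.trans (subset_insert e s))
    · simpa only [insert_sdiff_insert, sdiff_insert_of_notMem he] using
        hF (insert e T) (insert_subset_insert e hT)
  set L : Finset E → ℝ := fun T => F - rA (s \ T) - rB T
  set t := max 0 (s.powerset.sup' ⟨∅, empty_mem_powerset s⟩ L)
  have hLt : ∀ T ⊆ s, L T ≤ t := fun T hT =>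
    le_max_of_le_right (le_sup' L (mem_powerset.2 hT))
  have htle : ∀ u, 0 ≤ u → (∀ T ⊆ s, L T ≤ u) → t ≤ u := fun u h0 h =>
    max_le h0 (sup'_le _ _ fun T hT => h T (mem_powerset.1 hT))
  refine ⟨t, le_max_left _ _, ?_, ?_, ?_, fun T hT => ?_⟩
  · exact htle F hF0 fun T _ => by linarith [hA.nonneg (s \ T), hB.nonneg T]
  · exact htle _ (hA.nonneg _) fun T hT => by linarith [(hF' T hT).1, hA.insert_le e (s \ T)]
  · exact htle _ (hB.nonneg _) fun T hT => by linarith [(hF' T hT).2, hB.insert_le e T]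
  · have hG : t ≤ rA (insert e (s \ T)) + rB (insert e T) - F := by
      refine htle _ ?_ fun S hS => ?_
      · linarith [(hF' T hT).2, hA.mono (subset_insert e (s \ T))]
      · linarith [uncrossing_bound hA hB he hF hS hT]
    refine le_min_add_min ?_ ?_ ?_ ?_
    · linarith [hLt T hT]
    · linarith [(hF' T hT).2]
    · linarith [(hF' T hT).1]
    · linarith

theorem exists_mem_polymatroid_inter_sum_eq (hA : IsPolymatroidRank rA)
    (hB : IsPolymatroidRank rB) (hF0 : 0 ≤ F) (hF : ∀ T ⊆ s, F ≤ rA (s \ T) + rB T) :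
    ∃ x ∈ polymatroid rA ∩ polymatroid rB, ∑ e ∈ s, x e = F := by
  induction s using Finset.induction_on generalizing rA rB F with
  | empty =>
    have hF : F ≤ 0 := by simpa [hA.map_empty, hB.map_empty] using hF ∅ subset_rfl
    refine ⟨0, ⟨⟨fun _ => le_rfl, fun U => ?_⟩, fun _ => le_rfl, fun U => ?_⟩, ?_⟩
    · simpa using hA.nonneg U
    · simpa using hB.nonneg U
    · simp only [sum_empty]
      linarith
  | insert e s he ih =>
    obtain ⟨t, ht0, htF, htA, htB, hres⟩ := exists_peel_amount hA hB he hF0 hF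
    obtain ⟨x, ⟨hxA, hxB⟩, hxs⟩ :=
      ih (hA.residualRank htA) (hB.residualRank htB) (sub_nonneg.2 htF) hres
    refine ⟨Function.update x e t,
      ⟨update_mem_polymatroid hxA ht0, update_mem_polymatroid hxB ht0⟩, ?_⟩
    rw [sum_insert he, Function.update_self, sum_update_of_notMem he, hxs]
    ring

end Polymatroid

/-- If `F` is at most the polymatroid-intersection min, then there is a common point
of the two polymatroids with total mass exactly `F`. -/
theorem stmt12 {E : Type*} [Fintype E] [DecidableEq E]
    (rA rB : Finset E → ℝ)
    (hA0 : rA ∅ = 0) (hB0 : rB ∅ = 0)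
    (hAmono : ∀ U V : Finset E, U ⊆ V → rA U ≤ rA V)
    (hBmono : ∀ U V : Finset E, U ⊆ V → rB U ≤ rB V)
    (hAsub : ∀ U V : Finset E, rA (U ∪ V) + rA (U ∩ V) ≤ rA U + rA V)
    (hBsub : ∀ U V : Finset E, rB (U ∪ V) + rB (U ∩ V) ≤ rB U + rB V)
    (F : ℝ) (hF0 : 0 ≤ F)
    (hF : ∀ T : Finset E, F ≤ rA Tᶜ + rB T) :
    ∃ x : E → ℝ, (∀ e, 0 ≤ x e) ∧
      (∀ U : Finset E, ∑ e ∈ U, x e ≤ rA U) ∧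
      (∀ U : Finset E, ∑ e ∈ U, x e ≤ rB U) ∧ ∑ e, x e = F := by
  have hA : IsPolymatroidRank rA := ⟨hA0, fun U V h => hAmono U V h, hAsub⟩
  have hB : IsPolymatroidRank rB := ⟨hB0, fun U V h => hBmono U V h, hBsub⟩
  obtain ⟨x, ⟨⟨hx0, hxA⟩, -, hxB⟩, hxF⟩ := exists_mem_polymatroid_inter_sum_eq hA hB hF0
    (s := univ) fun T _ => by simpa only [← compl_eq_univ_sdiff] using hF T
  exact ⟨x, hx0, hxA, hxB, hxF⟩
end
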